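/- The balancing chain of a normed semistable polarised state terminates: if Ξ = (M, Ξ, α) is a normed semistable polarised state that is not polystable and α ≠ 0, then the state Ξ' obtained by slicing satisfies #(Ξ') < #(Ξ), where #(−) denotes the cardinality of the underlying finite state set. Consequently, the sequence of states in the balancing chain of any normed semistable polarised state is eventually constant with trivial balanced filtration. -/

import Mathlib

/-!
Write `α = ∑ c v • v` with `c ≥ 0` and `v ∈ Ξ`, and let `μ ≥ 0` on `cone Ξ` cut out the face `F`.
Then `0 = μ α = ∑ c v * μ v` is a sum of nonnegative terms, so `μ v = 0` whenever `c v ≠ 0`;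
as `α ≠ 0` some `c v` is nonzero, hence `F ∩ Ξ ≠ ∅`. Removing it strictly shrinks `Ξ`, and the
quotient map cannot increase cardinality. The second claim is the descending chain condition in `ℕ`.
-/

/-- The cone generated by a subset `S` of a `ℚ`-vector space. -/
def qCone {V : Type*} [AddCommGroup V] [Module ℚ V] (S : Set V) : Set V :=
  {x | ∃ (t : Finset V) (c : V → ℚ), (↑t : Set V) ⊆ S ∧ (∀ v, 0 ≤ c v) ∧
    x = ∑ v ∈ t, c v • v}

/-- `F` is a face of `C`: it is cut out on `C` by a linear form nonnegative on `C`. -/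
def IsFaceOf {V : Type*} [AddCommGroup V] [Module ℚ V] (C F : Set V) : Prop :=
  ∃ μ : V →ₗ[ℚ] ℚ, (∀ x ∈ C, 0 ≤ μ x) ∧ F = C ∩ {x | μ x = 0}

section Cone

variable {V : Type*} [AddCommGroup V] [Module ℚ V]

theorem subset_qCone (S : Set V) : S ⊆ qCone S := fun v hv =>
  ⟨{v}, fun _ => 1, by simpa using hv, fun _ => zero_le_one, by simp⟩

theorem IsFaceOf.exists_mem_inter_of_ne_zero {S F : Set V} (hF : IsFaceOf (qCone S) F)
    {α : V} (hα : α ∈ qCone S) (hαF : α ∈ F) (hα0 : α ≠ 0) : (F ∩ S).Nonempty := by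
  obtain ⟨μ, hμ, rfl⟩ := hF
  obtain ⟨t, c, htS, hc, rfl⟩ := hα
  have hterm : ∀ v ∈ t, 0 ≤ c v * μ v := fun v hv =>
    mul_nonneg (hc v) (hμ v (subset_qCone S (htS hv)))
  have hsum : ∑ v ∈ t, c v * μ v = 0 := by
    simpa only [Set.mem_ofPred_eq, map_sum, map_smul, smul_eq_mul] using hαF.2
  obtain ⟨v, hvt, hcv⟩ := Finset.exists_ne_zero_of_sum_ne_zero hα0
  have hμv : μ v = 0 :=
    (mul_eq_zero.1 ((Finset.sum_eq_zero_iff_of_nonneg hterm).1 hsum v hvt)).resolve_left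
      (fun h => hcv (by rw [h, zero_smul]))
  exact ⟨v, ⟨subset_qCone S (htS hvt), hμv⟩, htS hvt⟩

end Cone

theorem Set.ncard_image_diff_lt {α β : Type*} {s t : Set α} (hs : s.Finite)
    (hst : (t ∩ s).Nonempty) (f : α → β) : (f '' (s \ t)).ncard < s.ncard := by
  obtain ⟨v, hvt, hvs⟩ := hst
  calc (f '' (s \ t)).ncard ≤ (s \ t).ncard := Set.ncard_image_le hs.sdiff
    _ < s.ncard := Set.ncard_lt_ncard
      ⟨Set.sdiff_subset, fun h => (h hvs).2 hvt⟩ hs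

theorem stmt10_general {V : Type*} [AddCommGroup V] [Module ℚ V]
    (Ξ : Finset V) (α : V)
    (hα : α ∈ qCone (↑Ξ : Set V)) (hα0 : α ≠ 0) (F : Set V)
    (hF : IsFaceOf (qCone (↑Ξ : Set V)) F) (hαF : α ∈ F) :
    (⇑(Submodule.span ℚ (F ∩ (↑Ξ : Set V))).mkQ '' ((↑Ξ : Set V) \ F)).ncard
        < Ξ.card ∧
      ∀ g : ℕ → ℕ, (∀ n, g (n + 1) ≤ g n) → ∃ N, ∀ n ≥ N, g n = g N := by
  refine ⟨?_, fun g hg => ?_⟩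
  · rw [← Set.ncard_coe_finset]
    exact Set.ncard_image_diff_lt Ξ.finite_toSet
      (hF.exists_mem_inter_of_ne_zero hα hαF hα0) _
  · obtain ⟨N, hN⟩ := WellFoundedLT.antitone_chain_condition (antitone_nat_of_succ_le hg)
    exact ⟨N, fun n hn => (hN n hn).symm⟩

/-- Termination of the balancing chain of a normed semistable polarised state:
if `α ≠ 0` and the state is not polystable (the smallest face `F` of `cone Ξ`
containing `α` is not the whole cone), then the state set `q(Ξ \ F)` of the
slice (where `q` is the quotient by the span `K` of `F ∩ Ξ`) has strictly
fewer elements than `Ξ`. Consequently (since the cardinalities of the state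
sets along the balancing chain are weakly decreasing natural numbers) the
sequence of states in the balancing chain is eventually constant. -/
theorem stmt10 {V : Type*} [AddCommGroup V] [Module ℚ V] [FiniteDimensional ℚ V]
    (Ξ : Finset V) (hΞ0 : (0 : V) ∉ Ξ) (α : V)
    (hα : α ∈ qCone (↑Ξ : Set V)) (hα0 : α ≠ 0) (F : Set V)
    (hF : IsFaceOf (qCone (↑Ξ : Set V)) F) (hαF : α ∈ F)
    (hmin : ∀ F', IsFaceOf (qCone (↑Ξ : Set V)) F' → α ∈ F' → F ⊆ F')
    (hnps : F ≠ qCone (↑Ξ : Set V)) :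
    (⇑(Submodule.span ℚ (F ∩ (↑Ξ : Set V))).mkQ '' ((↑Ξ : Set V) \ F)).ncard
        < Ξ.card ∧
      ∀ g : ℕ → ℕ, (∀ n, g (n + 1) ≤ g n) → ∃ N, ∀ n ≥ N, g n = g N :=
  stmt10_general Ξ α hα hα0 F hF hαF
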